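/- Let q be a prime power, let l_1, l_2, ..., l_t be distinct odd primes coprime to q, let r_1, ..., r_t be positive integers, and for each i write ord_{l_i}(q) = 2^{a_i} d_i with a_i ≥ 0 an integer and d_i an odd positive integer. If a_1 = a_2 = ... = a_t = 1, then |Ω_{q^2, ∏_{i=1}^t l_i^{r_i}}| = Σ_{d | ∏_{i=1}^t l_i^{r_i}} φ(d)/ord_d(q^2), where φ is Euler's totient function. -/

import Mathlib

open Polynomial Finset

/-- The reciprocal polynomial `f*(x) = x^(deg f) * f(0)⁻¹ * f(1/x)`. -/
noncomputable def crecip {F : Type*} [Field F] (f : F[X]) : F[X] :=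
  C (f.coeff 0)⁻¹ * f.reverse

/-- The conjugate-reciprocal polynomial `f†`, obtained by applying the
conjugation `a ↦ a ^ q` to each coefficient of `f*`. -/
noncomputable def cdagger {F : Type*} [Field F] (q : ℕ) (f : F[X]) : F[X] :=
  (crecip f).sum fun i a => C (a ^ q) * X ^ i

/-- A polynomial is SCRIM if it is monic, irreducible, and self-conjugate-reciprocal. -/
def IsSCRIM {F : Type*} [Field F] (q : ℕ) (f : F[X]) : Prop :=
  f.Monic ∧ Irreducible f ∧ f = cdagger q f

/-- The set `Ω_{q²,n}` of SCRIM factors of `x^n - 1` over `F = F_{q²}`. -/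
def scrimFactors (F : Type*) [Field F] (q n : ℕ) : Set F[X] :=
  {f | IsSCRIM q f ∧ f ∣ X ^ n - 1}

/-!
As `ord_{l_i}(q)` is twice an odd number, `q ^ d_i ≡ -1 (mod l_i)`, and lifting the exponent
yields an odd `u` with `n ∣ q ^ u + 1`, where `n = ∏ l_i ^ r_i`. For a root `α` of an irreducible
factor `f` of `x ^ n - 1` this gives `α⁻¹ ^ q = α ^ (q²) ^ ((u + 1) / 2)`, a conjugate of `α` over
`F_{q²}`; it is a root of `f†`, so `f ∣ f†`, and both are monic of the same degree. Hence every
monic irreducible factor of `x ^ n - 1` is SCRIM, and their number is the classical count of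
irreducible factors of the cyclotomic polynomials `Φ_e`, `e ∣ n`, over a finite field.
-/

open Finset UniqueFactorizationMonoid

theorem dvd_pow_add_one_of_orderOf_eq_two_mul {l q d : ℕ} [Fact l.Prime] (hd : d ≠ 0)
    (h : orderOf (q : ZMod l) = 2 * d) : l ∣ q ^ d + 1 := by
  have horder : orderOf ((q : ZMod l) ^ d) = 2 := by
    rw [orderOf_pow_of_dvd hd (h ▸ dvd_mul_left d 2), h,
      Nat.mul_div_cancel _ (Nat.pos_of_ne_zero hd)]
  obtain ⟨hsq, hne⟩ := orderOf_eq_prime_iff.1 horder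
  have hneg : (q : ZMod l) ^ d = -1 := (sq_eq_one_iff.1 hsq).resolve_left hne
  rw [← ZMod.natCast_eq_zero_iff]
  push_cast
  rw [hneg, neg_add_cancel]

theorem pow_succ_dvd_pow_pow_add_one {l x : ℕ} (hl : Odd l) (h : l ∣ x + 1) (k : ℕ) :
    l ^ (k + 1) ∣ x ^ l ^ k + 1 := by
  have h' : (l : ℤ) ∣ x - (-1) := by rw [sub_neg_eq_add]; exact_mod_cast h
  have := dvd_sub_pow_of_dvd_sub h' k
  rw [hl.pow.neg_one_pow, sub_neg_eq_add] at this
  exact_mod_cast this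

theorem pow_add_one_dvd_pow_mul_add_one (q u : ℕ) {v : ℕ} (hv : Odd v) :
    q ^ u + 1 ∣ q ^ (u * v) + 1 := by
  simpa [pow_mul] using Odd.nat_add_dvd_pow_add_pow (q ^ u) 1 hv

theorem prod_dvd_pow_prod_add_one {ι : Type*} {s : Finset ι} {m u : ι → ℕ} (q : ℕ)
    (hcop : (s : Set ι).Pairwise (Function.onFun Nat.Coprime m)) (hu : ∀ i ∈ s, Odd (u i))
    (hm : ∀ i ∈ s, m i ∣ q ^ u i + 1) : ∏ i ∈ s, m i ∣ q ^ ∏ i ∈ s, u i + 1 := by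
  classical
  have hdvd : ∀ i ∈ s, m i ∣ q ^ ∏ i ∈ s, u i + 1 := fun i hi => by
    rw [← mul_prod_erase s u hi]
    exact (hm i hi).trans (pow_add_one_dvd_pow_mul_add_one q _ <|
      prod_induction _ Odd (fun _ _ => Odd.mul) odd_one fun j hj => hu j (mem_of_mem_erase hj))
  have : ∏ i ∈ s, (m i : ℤ) ∣ ((q ^ ∏ i ∈ s, u i + 1 : ℕ) : ℤ) :=
    prod_dvd_of_coprime (fun i hi j hj hij => Nat.isCoprime_iff_coprime.2 (hcop hi hj hij))
      fun i hi => Int.natCast_dvd_natCast.2 (hdvd i hi)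
  exact_mod_cast this

theorem exists_odd_prod_pow_dvd_pow_add_one {ι : Type*} [Fintype ι] {q : ℕ} {l r d : ι → ℕ}
    (hl : ∀ i, (l i).Prime) (hlodd : ∀ i, Odd (l i)) (hinj : Function.Injective l)
    (hord : ∀ i, orderOf (q : ZMod (l i)) = 2 * d i) (hd : ∀ i, Odd (d i)) :
    ∃ u, Odd u ∧ ∏ i, l i ^ r i ∣ q ^ u + 1 := by
  refine ⟨∏ i, d i * l i ^ (r i - 1),
    prod_induction _ Odd (fun _ _ => Odd.mul) odd_one fun i _ => (hd i).mul (hlodd i).pow,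
    prod_dvd_pow_prod_add_one q ?_ (fun i _ => (hd i).mul (hlodd i).pow) fun i _ => ?_⟩
  · exact fun i _ j _ hij =>
      ((Nat.coprime_primes (hl i) (hl j)).2 (hinj.ne hij)).pow (r i) (r j)
  · have := Fact.mk (hl i)
    rw [pow_mul]
    exact (pow_dvd_pow _ (by omega)).trans <| pow_succ_dvd_pow_pow_add_one (hlodd i)
      (dvd_pow_add_one_of_orderOf_eq_two_mul (hd i).pos.ne' (hord i)) (r i - 1)

section ConjugateReciprocal

variable {F : Type*} [Field F]

theorem natDegree_crecip {f : F[X]} (h0 : f.coeff 0 ≠ 0) :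
    (crecip f).natDegree = f.natDegree := by
  rw [crecip, natDegree_C_mul (inv_ne_zero h0), reverse_natDegree,
    natTrailingDegree_eq_zero.2 (Or.inr h0), Nat.sub_zero]

theorem monic_crecip {f : F[X]} (h0 : f.coeff 0 ≠ 0) : (crecip f).Monic := by
  rw [Monic, crecip, leadingCoeff_mul, leadingCoeff_C, reverse_leadingCoeff,
    trailingCoeff, natTrailingDegree_eq_zero.2 (Or.inr h0), inv_mul_cancel₀ h0]

theorem aeval_inv_crecip_eq_zero {L : Type*} [Field L] [Algebra F L] {f : F[X]} {x : L}
    (hx : x ≠ 0) (hf : aeval x f = 0) : aeval x⁻¹ (crecip f) = 0 := by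
  let := invertibleOfNonzero hx
  rw [aeval_def] at hf
  rw [crecip, map_mul, aeval_def, aeval_def, ← invOf_eq_inv,
    (eval₂_reverse_eq_zero_iff _ _ f).2 hf, mul_zero]

theorem cdagger_eq_map {q : ℕ} (φ : F →+* F) (hφ : ∀ a, φ a = a ^ q) (f : F[X]) :
    cdagger q f = (crecip f).map φ := by
  rw [cdagger, Polynomial.map, eval₂_eq_sum]
  simp only [RingHom.comp_apply, hφ]

theorem aeval_pow_card_pow_eq_zero [Fintype F] {L : Type*} [Field L] [Algebra F L]
    {f : F[X]} {x : L} (hx : aeval x f = 0) (m : ℕ) : aeval (x ^ Fintype.card F ^ m) f = 0 := by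
  induction m with
  | zero => rwa [pow_zero, pow_one]
  | succ m ih =>
    rw [pow_succ, pow_mul, ← expand_aeval, FiniteField.expand_card, map_pow, ih,
      zero_pow Fintype.card_ne_zero]

variable {p k : ℕ} [ExpChar F p]

theorem cdagger_eq_map_iterateFrobenius (f : F[X]) :
    cdagger (p ^ k) f = (crecip f).map (iterateFrobenius F p k) :=
  cdagger_eq_map _ (iterateFrobenius_def p k) f

theorem aeval_pow_cdagger {L : Type*} [Field L] [Algebra F L] (f : F[X]) (y : L) :
    aeval (y ^ p ^ k) (cdagger (p ^ k) f) = aeval y (crecip f) ^ p ^ k := by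
  have : ExpChar L p := expChar_of_injective_algebraMap (algebraMap F L).injective p
  have hcomm : (iterateFrobenius L p k).comp (algebraMap F L) =
      (algebraMap F L).comp (iterateFrobenius F p k) := by
    ext a; simp [iterateFrobenius_def]
  rw [cdagger_eq_map_iterateFrobenius, aeval_def, eval₂_map, ← hcomm,
    ← iterateFrobenius_def p k y, ← hom_eval₂, ← aeval_def, iterateFrobenius_def]

theorem cdagger_eq_self_of_pow_add_one_eq_one [Fintype F] {L : Type*} [Field L] [Algebra F L]
    (hF : Fintype.card F = (p ^ k) ^ 2) {f : F[X]} (hf : f.Monic) (hirr : Irreducible f)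
    {α : L} (hα : aeval α f = 0) {u : ℕ} (hu : Odd u) (hαu : α ^ ((p ^ k) ^ u + 1) = 1) :
    cdagger (p ^ k) f = f := by
  obtain ⟨m, rfl⟩ := hu
  have hα0 : α ≠ 0 := by rintro rfl; simp at hαu
  have hconj : α⁻¹ ^ p ^ k = α ^ Fintype.card F ^ (m + 1) := by
    have hpow : α ^ (p ^ k) ^ (2 * m + 1) = α⁻¹ :=
      eq_inv_of_mul_eq_one_left (by rw [← pow_succ, hαu])
    rw [hF, ← pow_mul, show 2 * (m + 1) = 2 * m + 1 + 1 by ring, pow_succ, pow_mul, hpow]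
  have hroot : aeval (α⁻¹ ^ p ^ k) f = 0 := hconj ▸ aeval_pow_card_pow_eq_zero hα (m + 1)
  have hdvd : f ∣ cdagger (p ^ k) f := by
    have hzero : aeval (α⁻¹ ^ p ^ k) (cdagger (p ^ k) f) = 0 := by
      rw [aeval_pow_cdagger, aeval_inv_crecip_eq_zero hα0 hα,
        zero_pow (pow_ne_zero k (expChar_pos F p).ne')]
    simpa only [← minpoly.eq_of_irreducible_of_monic hirr hroot hf] using minpoly.dvd F _ hzero
  have h0 : f.coeff 0 ≠ 0 := by
    have hint : IsIntegral F α := ⟨f, hf, by rwa [← aeval_def]⟩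
    rw [minpoly.eq_of_irreducible_of_monic hirr hα hf]
    exact minpoly.coeff_zero_ne_zero hint hα0
  refine eq_of_monic_of_dvd_of_natDegree_le hf ?_ hdvd ?_
  · rw [cdagger_eq_map_iterateFrobenius]
    exact (monic_crecip h0).map _
  · rw [cdagger_eq_map_iterateFrobenius, natDegree_map, natDegree_crecip h0]

theorem isSCRIM_of_dvd_X_pow_sub_one [Fintype F] (hF : Fintype.card F = (p ^ k) ^ 2)
    {n u : ℕ} (hu : Odd u) (hn : n ∣ (p ^ k) ^ u + 1) {f : F[X]} (hf : f.Monic)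
    (hirr : Irreducible f) (hdvd : f ∣ X ^ n - 1) : IsSCRIM (p ^ k) f := by
  have := Fact.mk hirr
  have hα : aeval (AdjoinRoot.root f) f = 0 := by rw [AdjoinRoot.aeval_eq, AdjoinRoot.mk_self]
  have hαn : AdjoinRoot.root f ^ n = 1 := by
    have := aeval_eq_zero_of_dvd_aeval_eq_zero hdvd hα
    rwa [map_sub, map_pow, aeval_X, map_one, sub_eq_zero] at this
  obtain ⟨c, hc⟩ := hn
  refine ⟨hf, hirr, (cdagger_eq_self_of_pow_add_one_eq_one hF hf hirr hα hu ?_).symm⟩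
  rw [hc, pow_mul, hαn, one_pow]

theorem scrimFactors_eq_setOf_monic_irreducible_dvd [Fintype F]
    (hF : Fintype.card F = (p ^ k) ^ 2) {n u : ℕ} (hu : Odd u) (hn : n ∣ (p ^ k) ^ u + 1) :
    scrimFactors F (p ^ k) n = {f | f.Monic ∧ Irreducible f ∧ f ∣ X ^ n - 1} := by
  ext f
  exact ⟨fun ⟨⟨hf, hirr, _⟩, hdvd⟩ => ⟨hf, hirr, hdvd⟩,
    fun ⟨hf, hirr, hdvd⟩ => ⟨isSCRIM_of_dvd_X_pow_sub_one hF hu hn hf hirr hdvd, hdvd⟩⟩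

end ConjugateReciprocal

theorem neZero_natCast_of_coprime_card {F : Type*} [Field F] [Fintype F] {n : ℕ}
    (hn : n.Coprime (Fintype.card F)) : NeZero (n : F) := by
  obtain ⟨p, _, m, hp, hcard⟩ := FiniteField.card' F
  refine ⟨fun h0 => hp.one_lt.ne' (Nat.dvd_one.1 ?_)⟩
  rw [← hn]
  exact Nat.dvd_gcd ((CharP.cast_eq_zero_iff F p n).1 h0) (hcard ▸ dvd_pow_self p m.ne_zero)

theorem normalizedFactors_finset_prod {α ι : Type*} [CommMonoidWithZero α]
    [NormalizationMonoid α] [UniqueFactorizationMonoid α] (s : Finset ι) (g : ι → α)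
    (hg : ∀ i ∈ s, g i ≠ 0) :
    normalizedFactors (∏ i ∈ s, g i) = ∑ i ∈ s, normalizedFactors (g i) := by
  rw [prod_eq_multiset_prod, normalizedFactors_multiset_prod, Multiset.map_map]
  · rfl
  · simpa [eq_comm] using hg

theorem ncard_setOf_monic_irreducible_dvd_X_pow_sub_one {F : Type*} [Field F] [Fintype F]
    {n : ℕ} (hn0 : n ≠ 0) (hn : n.Coprime (Fintype.card F)) :
    {f : F[X] | f.Monic ∧ Irreducible f ∧ f ∣ X ^ n - 1}.ncard =
      ∑ e ∈ n.divisors, e.totient / orderOf (Fintype.card F : ZMod e) := by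
  classical
  obtain ⟨p, _, m, hp, hcard⟩ := FiniteField.card' F
  have : Fact p.Prime := ⟨hp⟩
  have hne : X ^ n - 1 ≠ (0 : F[X]) := X_pow_sub_C_ne_zero (Nat.pos_of_ne_zero hn0) 1
  have hset : {f : F[X] | f.Monic ∧ Irreducible f ∧ f ∣ X ^ n - 1} =
      ↑(normalizedFactors (X ^ n - 1 : F[X])).toFinset := by
    ext f
    simp only [Set.mem_ofPred_eq, mem_coe, Multiset.mem_toFinset,
      Polynomial.mem_normalizedFactors_iff hne]
    tauto
  have hcop : ∀ e ∈ n.divisors, e.Coprime (Fintype.card F) := fun e he =>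
    hn.coprime_dvd_left (Nat.dvd_of_mem_divisors he)
  have hcard_e : ∀ e ∈ n.divisors, Multiset.card (normalizedFactors (cyclotomic e F)) =
      e.totient / orderOf (Fintype.card F : ZMod e) := fun e he => by
    have := neZero_natCast_of_coprime_card (hcop e he)
    have hnodup := (squarefree_iff_nodup_normalizedFactors (cyclotomic_ne_zero e F)).1
      (squarefree_cyclotomic e F)
    have hpe : p.Coprime e :=
      ((hcop e he).coprime_dvd_right (hcard ▸ dvd_pow_self p m.ne_zero)).symm
    rw [← Multiset.toFinset_card_of_nodup hnodup, normalizedFactors_cyclotomic_card hcard hpe,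
      ← orderOf_units, ZMod.coe_unitOfCoprime, hcard, Nat.cast_pow]
  have hsq : Squarefree (X ^ n - 1 : F[X]) := by
    have := neZero_natCast_of_coprime_card hn
    simpa using (separable_X_pow_sub_C (1 : F) (NeZero.ne (n : F)) one_ne_zero).squarefree
  rw [hset, Set.ncard_coe_finset,
    Multiset.toFinset_card_of_nodup ((squarefree_iff_nodup_normalizedFactors hne).1 hsq),
    ← prod_cyclotomic_eq_X_pow_sub_one (Nat.pos_of_ne_zero hn0),
    normalizedFactors_finset_prod _ _ fun e _ => cyclotomic_ne_zero e F, Multiset.card_sum]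
  exact sum_congr rfl hcard_e

theorem stmt12_general {q t : ℕ} (hq : IsPrimePow q)
    {F : Type*} [Field F] [Fintype F] (hF : Fintype.card F = q ^ 2)
    (l r a d : Fin t → ℕ)
    (hl : ∀ i, (l i).Prime) (hlodd : ∀ i, Odd (l i)) (hlq : ∀ i, Nat.Coprime (l i) q)
    (hinj : Function.Injective l)
    (hord : ∀ i, orderOf ((q : ZMod (l i))) = 2 ^ (a i) * d i)
    (hd : ∀ i, Odd (d i))
    (ha : ∀ i, a i = 1) :
    (scrimFactors F q (∏ i, l i ^ r i)).ncard =
      ∑ e ∈ (∏ i, l i ^ r i).divisors, Nat.totient e / orderOf ((q : ZMod e) ^ 2) := by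
  obtain ⟨u, hu, hdvd⟩ := exists_odd_prod_pow_dvd_pow_add_one (r := r) hl hlodd hinj
    (fun i => by rw [hord i, ha i, pow_one]) hd
  obtain ⟨p, k, hp, -, rfl⟩ := hq
  have := Fact.mk (Nat.prime_iff.2 hp)
  have : CharP F p := charP_of_card_eq_prime_pow (hF.trans (pow_mul p k 2).symm)
  have hcop : (∏ i, l i ^ r i).Coprime (Fintype.card F) :=
    hF ▸ (Nat.Coprime.prod_left fun i _ => (hlq i).pow_left _).pow_right 2
  rw [scrimFactors_eq_setOf_monic_irreducible_dvd hF hu hdvd,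
    ncard_setOf_monic_irreducible_dvd_X_pow_sub_one (prod_ne_zero_iff.2 fun i _ =>
      pow_ne_zero _ (hl i).ne_zero) hcop, hF]
  simp only [Nat.cast_pow]

theorem stmt12 {q t : ℕ} (hq : IsPrimePow q)
    {F : Type*} [Field F] [Fintype F] (hF : Fintype.card F = q ^ 2)
    (l r a d : Fin t → ℕ)
    (hl : ∀ i, (l i).Prime) (hlodd : ∀ i, Odd (l i)) (hlq : ∀ i, Nat.Coprime (l i) q)
    (hinj : Function.Injective l) (hr : ∀ i, 0 < r i)
    (hord : ∀ i, orderOf ((q : ZMod (l i))) = 2 ^ (a i) * d i)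
    (hd : ∀ i, Odd (d i))
    (ha : ∀ i, a i = 1) :
    (scrimFactors F q (∏ i, l i ^ r i)).ncard =
      ∑ e ∈ (∏ i, l i ^ r i).divisors, Nat.totient e / orderOf ((q : ZMod e) ^ 2) :=
  stmt12_general hq hF l r a d hl hlodd hlq hinj hord hd ha
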